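/- arXiv:1807.00400 — 6 statements merged into one kernel-verified Lean document; each statement's English description precedes it below -/
import Mathlib

section
/- The Hamming distance on S_n is a semimetric of negative type: for every m ≥ 2, all permutations σ_1,…,σ_m ∈ S_n and all real numbers α_1,…,α_m with α_1 + ⋯ + α_m = 0, one has Σ_{i=1}^m Σ_{j=1}^m α_i α_j d_H(σ_i, σ_j) ≤ 0. -/
private lemma sum_comm3 {m n : ℕ} (f : Fin m → Fin m → Fin n → ℝ) :
    ∑ i, ∑ j, ∑ k, f i j k = ∑ k, ∑ i, ∑ j, f i j k :=
  (Finset.sum_congr rfl fun _ _ => Finset.sum_comm).trans Finset.sum_comm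

/-- The Hamming distance on `S_n` is a semimetric of negative type: for every
`m ≥ 2`, permutations `σ_1, …, σ_m` and reals `α_1, …, α_m` summing to zero,
`Σ_{i,j} α_i α_j d_H(σ_i, σ_j) ≤ 0`. -/
theorem hammingDist_negative_type (n m : ℕ) (hm : 2 ≤ m)
    (σ : Fin m → Equiv.Perm (Fin n)) (α : Fin m → ℝ)
    (hα : ∑ i, α i = 0) :
    ∑ i, ∑ j, α i * α j * (hammingDist (⇑(σ i)) (⇑(σ j)) : ℝ) ≤ 0 := by
  have hd : ∀ i j, (hammingDist (⇑(σ i)) (⇑(σ j)) : ℝ)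
      = ∑ k : Fin n, ((1:ℝ) - if σ i k = σ j k then 1 else 0) := by
    intro i j
    rw [hammingDist, ← Finset.sum_boole]
    push_cast
    refine Finset.sum_congr rfl fun k _ => ?_
    by_cases h : σ i k = σ j k <;> simp [h]
  calc ∑ i, ∑ j, α i * α j * (hammingDist (⇑(σ i)) (⇑(σ j)) : ℝ)
      = ∑ k : Fin n, ∑ i, ∑ j,
          α i * α j * ((1:ℝ) - if σ i k = σ j k then 1 else 0) := by
        simp_rw [hd, Finset.mul_sum]
        exact sum_comm3 _
    _ ≤ ∑ k : Fin n, (0:ℝ) := by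
        refine Finset.sum_le_sum fun k _ => ?_
        have h1 : ∑ i, ∑ j, α i * α j * ((1:ℝ) - if σ i k = σ j k then 1 else 0)
            = (∑ i, α i) * (∑ j, α j)
              - ∑ i, ∑ j, α i * α j * (if σ i k = σ j k then (1:ℝ) else 0) := by
          rw [Finset.sum_mul_sum]
          simp_rw [mul_sub, mul_one, Finset.sum_sub_distrib]
        have hij : ∀ i j : Fin m,
            α i * α j * (if σ i k = σ j k then (1:ℝ) else 0)
            = ∑ v : Fin n,
                (if σ i k = v then α i else 0) * (if σ j k = v then α j else 0) := by
          intro i j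
          simp_rw [ite_mul, zero_mul]
          rw [Finset.sum_ite_eq]
          by_cases h : σ i k = σ j k
          · simp [h]
          · simp [h, Ne.symm h, (Ne.symm h : σ j k ≠ σ i k)]
        have hQ : 0 ≤ ∑ i, ∑ j, α i * α j * (if σ i k = σ j k then (1:ℝ) else 0) := by
          have : ∑ i, ∑ j, α i * α j * (if σ i k = σ j k then (1:ℝ) else 0)
              = ∑ v : Fin n, (∑ i, if σ i k = v then α i else 0) ^ 2 := by
            simp_rw [hij, sq, Finset.sum_mul_sum]
            exact sum_comm3 _
          rw [this]
          exact Finset.sum_nonneg fun v _ => sq_nonneg _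
        rw [h1, hα]
        simp only [zero_mul, zero_sub, neg_nonpos]
        exact hQ
    _ = 0 := by simp
end

section
/- The Kendall distance on S_n is a semimetric of negative type: for every m ≥ 2, all permutations σ_1,…,σ_m ∈ S_n and all real numbers α_1,…,α_m with α_1 + ⋯ + α_m = 0, one has Σ_{i=1}^m Σ_{j=1}^m α_i α_j d(σ_i, σ_j) ≤ 0. -/
/-- The Kendall (tau) distance between two permutations of `Fin n`:
the number of pairs `(x, y)` with `x < y` on which `σ⁻¹` and `τ⁻¹`
disagree in relative order. -/
def kendallDist {n : ℕ} (σ τ : Equiv.Perm (Fin n)) : ℕ :=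
  (Finset.univ.filter (fun p : Fin n × Fin n =>
    p.1 < p.2 ∧ ¬((σ⁻¹ p.1 < σ⁻¹ p.2) ↔ (τ⁻¹ p.1 < τ⁻¹ p.2)))).card

/-- The top-`k` partial ranking determined by the items `a 0, …, a (k-1)`:
the set of full rankings (permutations) `σ` with `σ i = a i` for the first
`k` positions. -/
def topkFinset {n k : ℕ} (hk : k ≤ n) (a : Fin k → Fin n) :
    Finset (Equiv.Perm (Fin n)) :=
  Finset.univ.filter fun σ => ∀ i : Fin k, σ (Fin.castLE hk i) = a i

/-- The permutation of `Fin n` fixing the first `k` positions and reversing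
the order of the remaining `n - k` positions. -/
def revAfter (n k : ℕ) : Equiv.Perm (Fin n) :=
  Function.Involutive.toPerm
    (fun p => if _h : (p : ℕ) < k then p
      else ⟨n + k - 1 - (p : ℕ), by have := p.isLt; omega⟩)
    (by
      intro p
      have hp := p.isLt
      by_cases h : (p : ℕ) < k
      · simp [h]
      · have h2 : ¬ (n + k - 1 - (p : ℕ) < k) := by omega
        simp only [dif_neg h, dif_neg h2]
        ext
        simp
        omega)

/-- The antithetic permutation of `σ` relative to a top-`k` partial ranking:
the first `k` positions are unchanged and the remaining positions are
reversed, i.e. `A σ (k+j) = σ (n+1-j)` (in 1-indexed notation). -/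
def antithetic (n k : ℕ) (σ : Equiv.Perm (Fin n)) : Equiv.Perm (Fin n) :=
  σ * revAfter n k

/-!
The Kendall distance is a squared Euclidean distance: encoding `σ` by the 0/1 vector recording,
for each pair `x < y`, whether `σ` ranks `x` before `y`, the distance `d(σ, τ)` is the squared
distance between the encodings. Squared Euclidean distances are of negative type, since for
weights `α` of sum zero `Σ_{i,j} α_i α_j (x_i - x_j)² = -2 (Σ_i α_i x_i)²`, coordinate by
coordinate.
-/

open Finset

section NegativeType

variable {ι κ : Type*} [Fintype ι]

theorem sum_sum_mul_mul_sub_sq_eq (α x : ι → ℝ) (hα : ∑ i, α i = 0) :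
    ∑ i, ∑ j, α i * α j * (x i - x j) ^ 2 = -2 * (∑ i, α i * x i) ^ 2 := by
  have expand : ∀ i j, α i * α j * (x i - x j) ^ 2 =
      α i * x i ^ 2 * α j - 2 * (α i * x i) * (α j * x j) + α i * (α j * x j ^ 2) := by
    intros; ring
  simp only [expand, sum_add_distrib, sum_sub_distrib, ← mul_sum, ← sum_mul, hα]
  ring

theorem sum_sum_mul_mul_sum_sub_sq_nonpos (s : Finset κ) (x : κ → ι → ℝ) (α : ι → ℝ)
    (hα : ∑ i, α i = 0) :
    ∑ i, ∑ j, α i * α j * ∑ k ∈ s, (x k i - x k j) ^ 2 ≤ 0 := by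
  calc ∑ i, ∑ j, α i * α j * ∑ k ∈ s, (x k i - x k j) ^ 2
      = ∑ k ∈ s, ∑ i, ∑ j, α i * α j * (x k i - x k j) ^ 2 := by
        simp only [mul_sum]
        exact (sum_congr rfl fun _ _ => sum_comm).trans sum_comm
    _ = ∑ k ∈ s, -2 * (∑ i, α i * x k i) ^ 2 :=
        sum_congr rfl fun k _ => sum_sum_mul_mul_sub_sq_eq α (x k) hα
    _ ≤ 0 := sum_nonpos fun k _ => by nlinarith [sq_nonneg (∑ i, α i * x k i)]

end NegativeType

section Kendall

variable {n : ℕ}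

def ranksBefore (σ : Equiv.Perm (Fin n)) (p : Fin n × Fin n) : ℝ :=
  if σ⁻¹ p.1 < σ⁻¹ p.2 then 1 else 0

theorem kendallDist_eq_sum_sub_sq (σ τ : Equiv.Perm (Fin n)) :
    (kendallDist σ τ : ℝ) =
      ∑ p ∈ univ.filter (fun p : Fin n × Fin n => p.1 < p.2),
        (ranksBefore σ p - ranksBefore τ p) ^ 2 := by
  rw [kendallDist, ← filter_filter, card_filter]
  push_cast
  refine sum_congr rfl fun p _ => ?_
  unfold ranksBefore
  by_cases hσ : σ⁻¹ p.1 < σ⁻¹ p.2 <;> by_cases hτ : τ⁻¹ p.1 < τ⁻¹ p.2 <;>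
    (simp only [Equiv.Perm.inv_def] at hσ hτ; simp [hσ, hτ])

end Kendall

theorem kendallDist_negative_type_general (n m : ℕ)
    (σ : Fin m → Equiv.Perm (Fin n)) (α : Fin m → ℝ)
    (hα : ∑ i, α i = 0) :
    ∑ i, ∑ j, α i * α j * (kendallDist (σ i) (σ j) : ℝ) ≤ 0 := by
  simp only [kendallDist_eq_sum_sub_sq]
  exact sum_sum_mul_mul_sum_sub_sq_nonpos _ (fun p i => ranksBefore (σ i) p) α hα

/-- The Kendall distance on `S_n` is a semimetric of negative type: for every
`m ≥ 2`, permutations `σ_1, …, σ_m` and reals `α_1, …, α_m` summing to zero,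
`Σ_{i,j} α_i α_j d(σ_i, σ_j) ≤ 0`. -/
theorem kendallDist_negative_type (n m : ℕ) (hm : 2 ≤ m)
    (σ : Fin m → Equiv.Perm (Fin n)) (α : Fin m → ℝ)
    (hα : ∑ i, α i = 0) :
    ∑ i, ∑ j, α i * α j * (kendallDist (σ i) (σ j) : ℝ) ≤ 0 :=
  kendallDist_negative_type_general n m σ α hα
end

section
/- For n ≥ 2, the Kendall kernel k_τ(σ, σ') = (n_c(σ, σ') − n_d(σ, σ')) / C(n,2) is a positive semidefinite kernel on S_n: it is symmetric, and for every m ≥ 1, all σ_1,…,σ_m ∈ S_n and all real numbers α_1,…,α_m, one has Σ_{i=1}^m Σ_{j=1}^m α_i α_j k_τ(σ_i, σ_j) ≥ 0. -/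
/-- The number of concordant item pairs of two permutations: pairs `(x, y)`
with `x < y` on which `σ⁻¹` and `τ⁻¹` agree in relative order. -/
def kendallConc {n : ℕ} (σ τ : Equiv.Perm (Fin n)) : ℕ :=
  (Finset.univ.filter (fun p : Fin n × Fin n =>
    p.1 < p.2 ∧ ((σ⁻¹ p.1 < σ⁻¹ p.2) ↔ (τ⁻¹ p.1 < τ⁻¹ p.2)))).card

/-- The Kendall kernel `k_τ(σ, σ') = (n_c(σ, σ') − n_d(σ, σ')) / C(n,2)`. -/
noncomputable def kendallKernel {n : ℕ} (σ τ : Equiv.Perm (Fin n)) : ℝ :=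
  ((kendallConc σ τ : ℝ) - (kendallDist σ τ : ℝ)) / (n.choose 2 : ℝ)

/-!
Encode a permutation `σ` by its sign vector `p ↦ ±1` over the item pairs `p = (x, y)` with
`x < y`, recording whether `σ` ranks `x` before `y`. A pair is concordant exactly when the two
signs agree, so `n_c − n_d` is the dot product of the two sign vectors. The Kendall kernel is
thus a nonnegative multiple of a Gram kernel, and its quadratic form is a sum of squares.
-/

open Finset

theorem sum_sum_mul_mul_sum_mul_nonneg {ι κ : Type*} [Fintype ι] (t : Finset κ)
    (f : ι → κ → ℝ) (α : ι → ℝ) :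
    0 ≤ ∑ i, ∑ j, α i * α j * ∑ p ∈ t, f i p * f j p := by
  have hsq : ∑ i, ∑ j, α i * α j * ∑ p ∈ t, f i p * f j p =
      ∑ p ∈ t, (∑ i, α i * f i p) ^ 2 := by
    simp_rw [sq, sum_mul_sum, mul_sum]
    conv_rhs => rw [sum_comm]
    refine sum_congr rfl fun i _ => ?_
    rw [sum_comm]
    exact sum_congr rfl fun j _ => sum_congr rfl fun p _ => by ring
  rw [hsq]
  exact sum_nonneg fun p _ => sq_nonneg _

section Kendall

variable {n : ℕ}

noncomputable def kendallSign (σ : Equiv.Perm (Fin n)) (p : Fin n × Fin n) : ℝ :=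
  if σ⁻¹ p.1 < σ⁻¹ p.2 then 1 else -1

theorem kendallSign_mul_kendallSign (σ τ : Equiv.Perm (Fin n)) (p : Fin n × Fin n) :
    kendallSign σ p * kendallSign τ p =
      if (σ⁻¹ p.1 < σ⁻¹ p.2 ↔ τ⁻¹ p.1 < τ⁻¹ p.2) then 1 else -1 := by
  unfold kendallSign
  split_ifs <;> norm_num <;> tauto

theorem kendallConc_sub_kendallDist (σ τ : Equiv.Perm (Fin n)) :
    (kendallConc σ τ : ℝ) - kendallDist σ τ =
      ∑ p ∈ univ.filter (fun p : Fin n × Fin n => p.1 < p.2),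
        kendallSign σ p * kendallSign τ p := by
  simp_rw [kendallSign_mul_kendallSign, sum_ite, sum_const, filter_filter, nsmul_eq_mul,
    mul_one, mul_neg_one, kendallConc, kendallDist, sub_eq_add_neg]

theorem kendallKernel_eq_sum_div (σ τ : Equiv.Perm (Fin n)) :
    kendallKernel σ τ =
      (∑ p ∈ univ.filter (fun p : Fin n × Fin n => p.1 < p.2),
        kendallSign σ p * kendallSign τ p) / n.choose 2 := by
  rw [kendallKernel, kendallConc_sub_kendallDist]

theorem kendallKernel_comm (σ τ : Equiv.Perm (Fin n)) :
    kendallKernel σ τ = kendallKernel τ σ := by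
  simp_rw [kendallKernel_eq_sum_div, mul_comm (kendallSign σ _)]

end Kendall

theorem kendallKernel_pos_semidef_general (n : ℕ) :
    (∀ σ τ : Equiv.Perm (Fin n), kendallKernel σ τ = kendallKernel τ σ) ∧
    (∀ m : ℕ, 1 ≤ m → ∀ (σ : Fin m → Equiv.Perm (Fin n)) (α : Fin m → ℝ),
      0 ≤ ∑ i, ∑ j, α i * α j * kendallKernel (σ i) (σ j)) := by
  refine ⟨kendallKernel_comm, fun m _ σ α => ?_⟩
  simp_rw [kendallKernel_eq_sum_div, ← mul_div_assoc, ← sum_div]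
  exact div_nonneg
    (sum_sum_mul_mul_sum_mul_nonneg _ (fun i => kendallSign (σ i)) α) (Nat.cast_nonneg _)

/-- For `n ≥ 2`, the Kendall kernel is a positive semidefinite kernel on `S_n`:
it is symmetric, and every Gram quadratic form is nonnegative. -/
theorem kendallKernel_pos_semidef (n : ℕ) (hn : 2 ≤ n) :
    (∀ σ τ : Equiv.Perm (Fin n), kendallKernel σ τ = kendallKernel τ σ) ∧
    (∀ m : ℕ, 1 ≤ m → ∀ (σ : Fin m → Equiv.Perm (Fin n)) (α : Fin m → ℝ),
      0 ≤ ∑ i, ∑ j, α i * α j * kendallKernel (σ i) (σ j)) :=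
  kendallKernel_pos_semidef_general n
end

section
/- Let R ⊆ S_n be the top-k partial ranking determined by distinct items a_1,…,a_k, and let σ ∈ R. Then the antithetic permutation A_R(σ) lies in R, the Kendall distance satisfies d(σ, A_R(σ)) = C(n−k, 2), and A_R(σ) is the unique maximizer of the Kendall distance from σ within R: for every τ ∈ R, d(σ, τ) ≤ C(n−k, 2), with equality if and only if τ = A_R(σ). -/
/-!
Relabelling the items does not change the Kendall distance, so `d(σ, τ)` is the number of
inversions of `τ⁻¹ * σ`. For `τ` in the partial ranking this permutation fixes the first `k`
positions and so permutes the tail positions among themselves; its inversions are then pairs of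
tail positions, of which there are `C(n - k, 2)`. The reversal of the tail, `revAfter n k`,
inverts every such pair, and a permutation is determined by its set of inversions.
-/

open Finset

namespace Equiv.Perm

variable {α : Type*} [LinearOrder α] [Fintype α]

def inversions (π : Perm α) : Finset (α × α) := {q | q.1 < q.2 ∧ π q.2 < π q.1}

@[simp]
lemma mem_inversions {π : Perm α} {q : α × α} :
    q ∈ π.inversions ↔ q.1 < q.2 ∧ π q.2 < π q.1 := by
  simp [inversions]

/-- If `σ` and `ρ` invert the same pairs, then `ρ * σ⁻¹` is strictly monotone, hence the
identity. -/
lemma inversions_injective : Function.Injective (inversions : Perm α → Finset (α × α)) := by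
  intro σ ρ h
  have hinv : ∀ x y, x < y → (σ y < σ x ↔ ρ y < ρ x) := fun x y hxy => by
    simpa [hxy] using congrArg ((x, y) ∈ ·) h
  have hmono : StrictMono (ρ * σ⁻¹) := by
    intro u v huv
    obtain ⟨x, rfl⟩ := σ.surjective u
    obtain ⟨y, rfl⟩ := σ.surjective v
    simp only [coe_mul, coe_inv, Function.comp_apply, symm_apply_apply]
    rcases lt_trichotomy x y with hxy | rfl | hxy
    · exact lt_of_le_of_ne (not_lt.1 ((hinv x y hxy).not.1 huv.not_gt)) (ρ.injective.ne hxy.ne)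
    · exact absurd huv (lt_irrefl _)
    · exact (hinv y x hxy).1 huv
  exact (mul_inv_eq_one.1 (Equiv.ext (congrFun hmono.eq_id))).symm

variable {t : Finset α} {π : Perm α}

lemma inversions_subset_of_forall_notMem (ht : IsUpperSet (t : Set α))
    (hπ : ∀ x ∉ t, π x = x) : π.inversions ⊆ {q ∈ t ×ˢ t | q.1 < q.2} := by
  have hmaps : ∀ x ∈ t, π x ∈ t := fun x hx => by
    by_contra h
    rw [π.injective (hπ _ h)] at h
    exact h hx
  rintro ⟨x, y⟩ hxy
  rw [mem_inversions] at hxy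
  obtain ⟨hlt, hinv⟩ := hxy
  have hx : x ∈ t := by
    by_contra hx
    rw [hπ x hx] at hinv
    have hy : y ∉ t := fun hy => hx (ht hinv.le (hmaps y hy))
    exact absurd hlt (not_lt.2 (hπ y hy ▸ hinv.le))
  simpa [hx, hlt] using ht hlt.le hx

lemma card_inversions_le (ht : IsUpperSet (t : Set α)) (hπ : ∀ x ∉ t, π x = x) :
    #π.inversions ≤ (#t).choose 2 :=
  card_product_filter_lt (s := t) ▸ card_le_card (inversions_subset_of_forall_notMem ht hπ)

lemma card_inversions_eq_choose_iff (ht : IsUpperSet (t : Set α)) (hπ : ∀ x ∉ t, π x = x) :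
    #π.inversions = (#t).choose 2 ↔ π.inversions = {q ∈ t ×ˢ t | q.1 < q.2} := by
  rw [← card_product_filter_lt]
  refine ⟨fun h => eq_of_subset_of_card_le (inversions_subset_of_forall_notMem ht hπ) h.ge,
    fun h => h ▸ rfl⟩

end Equiv.Perm

section Relabel

variable {α : Type*} [LinearOrder α] [Fintype α] {r : α → α → Prop} [DecidableRel r]

lemma two_mul_card_filter_lt (hr : ∀ x y, r x y → r y x) :
    2 * #{q : α × α | q.1 < q.2 ∧ r q.1 q.2} = #{q : α × α | q.1 ≠ q.2 ∧ r q.1 q.2} := by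
  have hswap : #{q : α × α | q.1 < q.2 ∧ r q.1 q.2} = #{q : α × α | q.2 < q.1 ∧ r q.1 q.2} :=
    card_equiv (Equiv.prodComm α α) (by grind)
  rw [two_mul]
  nth_rw 2 [hswap]
  rw [← card_union_of_disjoint (disjoint_filter.2 fun q _ h h' => ?_)]
  · congr 1
    ext q
    simp only [mem_union, mem_filter, mem_univ, true_and, ne_iff_lt_or_gt]
    tauto
  · exact lt_asymm h.1 h'.1

lemma card_filter_lt_comp_equiv (hr : ∀ x y, r x y → r y x) (f : α ≃ α) :
    #{q : α × α | q.1 < q.2 ∧ r (f q.1) (f q.2)} = #{q : α × α | q.1 < q.2 ∧ r q.1 q.2} := by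
  refine Nat.eq_of_mul_eq_mul_left two_pos ?_
  rw [two_mul_card_filter_lt (r := fun x y => r (f x) (f y)) (fun x y => hr (f x) (f y)),
    two_mul_card_filter_lt hr]
  exact card_equiv (f.prodCongr f) (by simp)

omit [LinearOrder α] [Fintype α] in
lemma not_lt_iff_lt_symm {β : Type*} [LinearOrder β] {f g : α → β} (hf : f.Injective)
    (hg : g.Injective) (x y : α) : ¬(f x < f y ↔ g x < g y) → ¬(f y < f x ↔ g y < g x) := by
  intro h
  rcases eq_or_ne x y with rfl | hxy
  · exact h
  · have hfne := hf.ne hxy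
    have hgne := hg.ne hxy
    grind

end Relabel

section Ranking

variable {n k : ℕ}

lemma kendallDist_mul_left (ρ σ τ : Equiv.Perm (Fin n)) :
    kendallDist (ρ * σ) (ρ * τ) = kendallDist σ τ := by
  simp only [kendallDist, mul_inv_rev, Equiv.Perm.mul_apply]
  exact card_filter_lt_comp_equiv (not_lt_iff_lt_symm σ⁻¹.injective τ⁻¹.injective) ρ⁻¹

lemma kendallDist_one_left (π : Equiv.Perm (Fin n)) : kendallDist 1 π = #π⁻¹.inversions := by
  unfold kendallDist
  congr 1
  ext q
  have hne := π⁻¹.injective.ne_iff (x := q.1) (y := q.2)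
  simp only [mem_filter, mem_univ, true_and, inv_one, Equiv.Perm.one_apply,
    Equiv.Perm.mem_inversions]
  grind

lemma kendallDist_eq_card_inversions (σ τ : Equiv.Perm (Fin n)) :
    kendallDist σ τ = #(τ⁻¹ * σ).inversions := by
  rw [← kendallDist_mul_left σ⁻¹, inv_mul_cancel, kendallDist_one_left, mul_inv_rev, inv_inv]

def tailPositions (n k : ℕ) : Finset (Fin n) := {p | k ≤ (p : ℕ)}

lemma card_tailPositions : #(tailPositions n k) = n - k := by
  rw [tailPositions, ← card_map Fin.valEmbedding, map_filter', Fin.map_valEmbedding_univ,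
    ← Nat.card_Ico]
  congr 1
  ext m
  simp only [Fin.valEmbedding_apply, mem_filter, mem_Iio, mem_Ico]
  constructor
  · rintro ⟨hm, p, hkp, rfl⟩
    exact ⟨hkp, hm⟩
  · rintro ⟨hkm, hm⟩
    exact ⟨hm, ⟨m, hm⟩, hkm, rfl⟩

lemma isUpperSet_tailPositions : IsUpperSet (tailPositions n k : Set (Fin n)) := by
  intro p q hpq hp
  simp only [tailPositions, coe_filter, mem_univ, true_and] at hp ⊢
  exact le_trans (α := ℕ) hp hpq

lemma val_revAfter_apply (p : Fin n) :
    (revAfter n k p : ℕ) = if (p : ℕ) < k then (p : ℕ) else n + k - 1 - p := by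
  unfold revAfter
  split_ifs with h <;> simp [Function.Involutive.toPerm, h]

lemma revAfter_inv : (revAfter n k)⁻¹ = revAfter n k :=
  Function.Involutive.toPerm_symm _

lemma inversions_revAfter :
    (revAfter n k).inversions = {q ∈ tailPositions n k ×ˢ tailPositions n k | q.1 < q.2} := by
  ext ⟨x, y⟩
  simp only [Equiv.Perm.mem_inversions, mem_filter, mem_product, tailPositions, mem_univ,
    true_and, Fin.lt_def, val_revAfter_apply]
  have hy := y.isLt
  split_ifs <;> omega

lemma eq_antithetic_iff {σ τ : Equiv.Perm (Fin n)} :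
    τ = antithetic n k σ ↔ τ⁻¹ * σ = revAfter n k := by
  rw [antithetic, inv_mul_eq_iff_eq_mul, ← mul_inv_eq_iff_eq_mul, revAfter_inv, eq_comm]

lemma antithetic_mem_topkFinset {hk : k ≤ n} {a : Fin k → Fin n} {σ : Equiv.Perm (Fin n)}
    (hσ : σ ∈ topkFinset hk a) : antithetic n k σ ∈ topkFinset hk a := by
  simp only [topkFinset, mem_filter, mem_univ, true_and] at hσ ⊢
  intro i
  have hi : revAfter n k (Fin.castLE hk i) = Fin.castLE hk i := by
    ext
    simp [val_revAfter_apply]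
  rw [antithetic, Equiv.Perm.mul_apply, hi, hσ]

lemma inv_mul_apply_of_mem_topkFinset {hk : k ≤ n} {a : Fin k → Fin n}
    {σ τ : Equiv.Perm (Fin n)} (hσ : σ ∈ topkFinset hk a) (hτ : τ ∈ topkFinset hk a) :
    ∀ p ∉ tailPositions n k, (τ⁻¹ * σ) p = p := by
  intro p hp
  simp only [tailPositions, mem_filter, mem_univ, true_and, not_le] at hp
  simp only [topkFinset, mem_filter, mem_univ, true_and] at hσ hτ
  rw [Equiv.Perm.mul_apply, Equiv.Perm.inv_eq_iff_eq]
  exact (hσ ⟨p, hp⟩).trans (hτ ⟨p, hp⟩).symm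

end Ranking

theorem antithetic_unique_max_general {n k : ℕ} (hk : k ≤ n) (a : Fin k → Fin n)
    (σ : Equiv.Perm (Fin n))
    (hσ : σ ∈ topkFinset hk a) :
    antithetic n k σ ∈ topkFinset hk a ∧
    kendallDist σ (antithetic n k σ) = (n - k).choose 2 ∧
    ∀ τ ∈ topkFinset hk a,
      kendallDist σ τ ≤ (n - k).choose 2 ∧
      (kendallDist σ τ = (n - k).choose 2 ↔ τ = antithetic n k σ) := by
  have hdist : kendallDist σ (antithetic n k σ) = (n - k).choose 2 := by
    rw [kendallDist_eq_card_inversions, eq_antithetic_iff.1 rfl, inversions_revAfter,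
      card_product_filter_lt, card_tailPositions]
  refine ⟨antithetic_mem_topkFinset hσ, hdist, fun τ hτ => ?_⟩
  have hfix := inv_mul_apply_of_mem_topkFinset hσ hτ
  rw [kendallDist_eq_card_inversions, ← card_tailPositions, eq_antithetic_iff,
    ← Equiv.Perm.inversions_injective.eq_iff, inversions_revAfter]
  exact ⟨Equiv.Perm.card_inversions_le isUpperSet_tailPositions hfix,
    Equiv.Perm.card_inversions_eq_choose_iff isUpperSet_tailPositions hfix⟩

/-- For a top-`k` partial ranking `R` determined by distinct items
`a 0, …, a (k-1)` and `σ ∈ R`: the antithetic permutation `A_R(σ)` lies in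
`R`, satisfies `d(σ, A_R(σ)) = C(n−k, 2)`, and is the unique maximizer of the
Kendall distance from `σ` within `R`. -/
theorem antithetic_unique_max {n k : ℕ} (hk : k ≤ n) (a : Fin k → Fin n)
    (ha : Function.Injective a) (σ : Equiv.Perm (Fin n))
    (hσ : σ ∈ topkFinset hk a) :
    antithetic n k σ ∈ topkFinset hk a ∧
    kendallDist σ (antithetic n k σ) = (n - k).choose 2 ∧
    ∀ τ ∈ topkFinset hk a,
      kendallDist σ τ ≤ (n - k).choose 2 ∧
      (kendallDist σ τ = (n - k).choose 2 ↔ τ = antithetic n k σ) :=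
  antithetic_unique_max_general hk a σ hσ
end

section
/- Let R ⊆ S_n be the top-l partial ranking determined by distinct items a_1,…,a_l, and let σ, τ ∈ R. Then the Kendall distance satisfies d(σ, τ) = C(n−l, 2) − d(A_R(σ), τ). -/
/-!
Since `σ` and `τ` place the same items in the first `l` positions, they can only disagree on
pairs of items that both sit among the last `n - l` positions of `σ`. On such a pair, reversing
those positions flips the relative order under `σ`, so exactly one of `σ` and `A_R(σ)` disagrees
with `τ`. Hence `d(σ, τ) + d(A_R(σ), τ)` is the number of such pairs, `C(n - l, 2)`.
-/

open Finset

section revAfter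

variable {n k : ℕ}

lemma revAfter_of_lt {p : Fin n} (h : (p : ℕ) < k) : revAfter n k p = p :=
  dif_pos h

lemma val_revAfter_of_le {p : Fin n} (h : k ≤ (p : ℕ)) :
    (revAfter n k p : ℕ) = n + k - 1 - p := by
  have hp : revAfter n k p = ⟨n + k - 1 - p, by omega⟩ := dif_neg (by omega)
  rw [hp]

lemma val_revAfter_lt_iff {p : Fin n} : (revAfter n k p : ℕ) < k ↔ (p : ℕ) < k := by
  rcases lt_or_ge (p : ℕ) k with h | h
  · rw [revAfter_of_lt h]
  · have := p.isLt
    rw [val_revAfter_of_le h]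
    omega

lemma revAfter_lt_revAfter_iff {p q : Fin n} (hp : k ≤ (p : ℕ)) (hq : k ≤ (q : ℕ)) :
    revAfter n k p < revAfter n k q ↔ q < p := by
  have := p.isLt
  have := q.isLt
  rw [Fin.lt_def, Fin.lt_def, val_revAfter_of_le hp, val_revAfter_of_le hq]
  omega

end revAfter

section agree

variable {n l : ℕ} {σ τ : Equiv.Perm (Fin n)}

lemma eq_of_mem_topkFinset {hl : l ≤ n} {a : Fin l → Fin n}
    (hσ : σ ∈ topkFinset hl a) (hτ : τ ∈ topkFinset hl a) (i : Fin n) (hi : (i : ℕ) < l) :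
    σ i = τ i := by
  simp only [topkFinset, mem_filter, mem_univ, true_and] at hσ hτ
  have hcast : Fin.castLE hl ⟨i, hi⟩ = i := rfl
  rw [← hcast, hσ, hτ]

lemma mul_revAfter_apply_of_lt (i : Fin n) (hi : (i : ℕ) < l) :
    (σ * revAfter n l) i = σ i := by
  rw [Equiv.Perm.mul_apply, revAfter_of_lt hi]

lemma inv_apply_eq_of_eq_of_lt (h : ∀ i : Fin n, (i : ℕ) < l → σ i = τ i) {x : Fin n}
    (hx : (σ⁻¹ x : ℕ) < l) : τ⁻¹ x = σ⁻¹ x := by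
  rw [Equiv.Perm.inv_eq_iff_eq, ← h _ hx]
  exact (σ.apply_symm_apply x).symm

lemma val_inv_lt_iff_of_eq_of_lt (h : ∀ i : Fin n, (i : ℕ) < l → σ i = τ i) (x : Fin n) :
    (σ⁻¹ x : ℕ) < l ↔ (τ⁻¹ x : ℕ) < l := by
  constructor
  · intro hx
    rwa [inv_apply_eq_of_eq_of_lt h hx]
  · intro hx
    rwa [inv_apply_eq_of_eq_of_lt (fun i hi => (h i hi).symm) hx]

lemma inv_lt_inv_iff_of_eq_of_lt (h : ∀ i : Fin n, (i : ℕ) < l → σ i = τ i) {x y : Fin n}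
    (hxy : ¬(l ≤ (σ⁻¹ x : ℕ) ∧ l ≤ (σ⁻¹ y : ℕ))) :
    σ⁻¹ x < σ⁻¹ y ↔ τ⁻¹ x < τ⁻¹ y := by
  have hx := val_inv_lt_iff_of_eq_of_lt h x
  have hy := val_inv_lt_iff_of_eq_of_lt h y
  rw [Fin.lt_def, Fin.lt_def]
  rcases lt_or_ge (σ⁻¹ x : ℕ) l with hxl | hxl <;> rcases lt_or_ge (σ⁻¹ y : ℕ) l with hyl | hyl
  · rw [inv_apply_eq_of_eq_of_lt h hxl, inv_apply_eq_of_eq_of_lt h hyl]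
  all_goals omega

end agree

section count

variable {n l : ℕ} {σ τ : Equiv.Perm (Fin n)}

/-- The items that `σ` ranks at positions `l, l + 1, …` (0-indexed). -/
def tailItems (σ : Equiv.Perm (Fin n)) (l : ℕ) : Finset (Fin n) :=
  {x | l ≤ (σ⁻¹ x : ℕ)}

@[simp]
lemma mem_tailItems {x : Fin n} : x ∈ tailItems σ l ↔ l ≤ (σ⁻¹ x : ℕ) := by
  simp [tailItems]

lemma card_tailItems (σ : Equiv.Perm (Fin n)) (l : ℕ) : #(tailItems σ l) = n - l := by
  have hσ : #(tailItems σ l) = #{i : Fin n | l ≤ (i : ℕ)} :=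
    card_equiv σ⁻¹ (by simp)
  have hsplit := card_filter_add_card_filter_not (s := univ) fun i : Fin n => (i : ℕ) < l
  simp only [Fin.card_filter_val_lt, card_univ, Fintype.card_fin, not_lt] at hsplit
  omega

lemma mul_revAfter_inv_apply (x : Fin n) :
    (σ * revAfter n l)⁻¹ x = revAfter n l (σ⁻¹ x) := by
  rw [mul_inv_rev, revAfter_inv, Equiv.Perm.mul_apply]

lemma mul_revAfter_inv_lt_iff {x y : Fin n} (hx : l ≤ (σ⁻¹ x : ℕ)) (hy : l ≤ (σ⁻¹ y : ℕ))
    (hxy : x ≠ y) :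
    (σ * revAfter n l)⁻¹ x < (σ * revAfter n l)⁻¹ y ↔ ¬σ⁻¹ x < σ⁻¹ y := by
  have hne : σ⁻¹ y ≠ σ⁻¹ x := (σ⁻¹).injective.ne hxy.symm
  rw [mul_revAfter_inv_apply, mul_revAfter_inv_apply, revAfter_lt_revAfter_iff hx hy]
  exact ⟨fun h => lt_asymm h, fun h => lt_of_le_of_ne (not_lt.1 h) hne⟩

lemma kendallDist_eq_card_filter (h : ∀ i : Fin n, (i : ℕ) < l → σ i = τ i) :
    kendallDist σ τ = #{p ∈ {p ∈ tailItems σ l ×ˢ tailItems σ l | p.1 < p.2} |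
      ¬(σ⁻¹ p.1 < σ⁻¹ p.2 ↔ τ⁻¹ p.1 < τ⁻¹ p.2)} := by
  unfold kendallDist
  congr 1
  ext ⟨x, y⟩
  have := inv_lt_inv_iff_of_eq_of_lt h (x := x) (y := y)
  simp only [mem_filter, mem_univ, true_and, mem_product, mem_tailItems]
  tauto

lemma kendallDist_mul_revAfter_eq_card_filter (h : ∀ i : Fin n, (i : ℕ) < l → σ i = τ i) :
    kendallDist (σ * revAfter n l) τ =
      #{p ∈ {p ∈ tailItems σ l ×ˢ tailItems σ l | p.1 < p.2} |
        (σ⁻¹ p.1 < σ⁻¹ p.2 ↔ τ⁻¹ p.1 < τ⁻¹ p.2)} := by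
  have hρ (i : Fin n) (hi : (i : ℕ) < l) : (σ * revAfter n l) i = τ i :=
    (mul_revAfter_apply_of_lt i hi).trans (h i hi)
  unfold kendallDist
  congr 1
  ext ⟨x, y⟩
  have htop := inv_lt_inv_iff_of_eq_of_lt hρ (x := x) (y := y)
  have htail := mul_revAfter_inv_lt_iff (σ := σ) (l := l) (x := x) (y := y)
  simp only [mul_revAfter_inv_apply, ← not_lt, val_revAfter_lt_iff] at htop htail
  have hne : x < y → x ≠ y := ne_of_lt
  simp only [mem_filter, mem_univ, true_and, mem_product, mem_tailItems, mul_revAfter_inv_apply,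
    ← not_lt]
  tauto

lemma kendallDist_add_kendallDist_mul_revAfter (h : ∀ i : Fin n, (i : ℕ) < l → σ i = τ i) :
    kendallDist σ τ + kendallDist (σ * revAfter n l) τ = (n - l).choose 2 := by
  rw [kendallDist_eq_card_filter h, kendallDist_mul_revAfter_eq_card_filter h, add_comm,
    card_filter_add_card_filter_not, card_product_filter_lt, card_tailItems]

end count

theorem kendallDist_antithetic_topk_general {n l : ℕ} (hl : l ≤ n)
    (a : Fin l → Fin n)
    (σ τ : Equiv.Perm (Fin n))
    (hσ : σ ∈ topkFinset hl a) (hτ : τ ∈ topkFinset hl a) :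
    (kendallDist σ τ : ℤ) =
      ((n - l).choose 2 : ℤ) - (kendallDist (antithetic n l σ) τ : ℤ) := by
  have hsum := kendallDist_add_kendallDist_mul_revAfter (eq_of_mem_topkFinset hσ hτ)
  rw [antithetic, ← hsum]
  push_cast
  ring

/-- For a top-`l` partial ranking `R` determined by distinct items
`a 0, …, a (l-1)` and `σ, τ ∈ R`, the Kendall distance satisfies
`d(σ, τ) = C(n−l, 2) − d(A_R(σ), τ)`. -/
theorem kendallDist_antithetic_topk {n l : ℕ} (hl : l ≤ n)
    (a : Fin l → Fin n) (ha : Function.Injective a)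
    (σ τ : Equiv.Perm (Fin n))
    (hσ : σ ∈ topkFinset hl a) (hτ : τ ∈ topkFinset hl a) :
    (kendallDist σ τ : ℤ) =
      ((n - l).choose 2 : ℤ) - (kendallDist (antithetic n l σ) τ : ℤ) :=
  kendallDist_antithetic_topk_general hl a σ τ hσ hτ
end

section
/- Let R ⊆ S_n be a top-k partial ranking, σ ∈ R, and τ ∈ S_n. Then the Kendall distance decomposes as d(σ, τ) = d(σ, Π_R(τ)) + d(Π_R(τ), τ), where Π_R(τ) is the unique Kendall-closest element of R to τ. -/
/-!
A minimiser `π` of the distance to `τ` over `R` must list the unconstrained items in `τ`'s order: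
otherwise two of them sit at adjacent positions `p ⋖ q ≥ k` in the wrong order, and swapping them
stays in `R` while removing exactly one disagreement with `τ`. Two members of `R` agree on every
pair involving a constrained item, so on each pair `π` agrees with `σ` or with `τ`, and the
disagreement set of `σ, τ` splits into those of `σ, π` and of `π, τ`.
-/

open Equiv

variable {n k : ℕ}

theorem kendallDist_eq_add_of_forall_agree {σ π τ : Perm (Fin n)}
    (h : ∀ x y : Fin n, x < y →
      (π⁻¹ x < π⁻¹ y ↔ σ⁻¹ x < σ⁻¹ y) ∨ (π⁻¹ x < π⁻¹ y ↔ τ⁻¹ x < τ⁻¹ y)) :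
    kendallDist σ τ = kendallDist σ π + kendallDist π τ := by
  unfold kendallDist
  rw [← Finset.card_union_of_disjoint]
  · congr 1
    ext ⟨x, y⟩
    simp only [Finset.mem_filter, Finset.mem_univ, true_and, Finset.mem_union]
    constructor
    · rintro ⟨hxy, hστ⟩
      have := h x y hxy
      tauto
    · rintro (⟨hxy, hσπ⟩ | ⟨hxy, hπτ⟩) <;>
      · have := h x y hxy
        tauto
  · rw [Finset.disjoint_filter]
    rintro ⟨x, y⟩ - ⟨hxy, hσπ⟩ ⟨-, hπτ⟩
    have := h x y hxy
    tauto

theorem swap_apply_lt_swap_apply_iff_of_covBy {p q u v : Fin n} (hpq : p ⋖ q)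
    (huv : ¬(u = p ∧ v = q)) (hvu : ¬(u = q ∧ v = p)) :
    swap p q u < swap p q v ↔ u < v := by
  rw [Fin.covBy_iff, Nat.covBy_iff_add_one_eq] at hpq
  simp only [swap_apply_def]
  split_ifs <;> simp only [Fin.lt_def, Fin.ext_iff] at * <;> omega

theorem kendallDist_mul_swap_lt {π τ : Perm (Fin n)} {p q : Fin n} (hpq : p ⋖ q)
    (hτ : τ⁻¹ (π q) < τ⁻¹ (π p)) : kendallDist (π * swap p q) τ < kendallDist π τ := by
  have hinv : ∀ x, (π * swap p q)⁻¹ x = swap p q (π⁻¹ x) := fun x => by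
    simp [mul_inv_rev]
  rw [Perm.inv_def] at hτ
  unfold kendallDist
  apply Finset.card_lt_card
  rw [Finset.ssubset_iff_of_subset]
  · obtain ⟨x, y, hxy, hpair⟩ : ∃ x y, x < y ∧ (x = π p ∧ y = π q ∨ x = π q ∧ y = π p) := by
      rcases lt_or_gt_of_ne (π.injective.ne hpq.ne) with h | h
      exacts [⟨_, _, h, .inl ⟨rfl, rfl⟩⟩, ⟨_, _, h, .inr ⟨rfl, rfl⟩⟩]
    refine ⟨(x, y), ?_, ?_⟩ <;>
      rcases hpair with ⟨rfl, rfl⟩ | ⟨rfl, rfl⟩ <;>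
      simp [hxy, hτ, hpq.lt, hτ.le, hpq.lt.not_gt]
  · rintro ⟨x, y⟩
    simp only [Finset.mem_filter, Finset.mem_univ, true_and, hinv]
    rintro ⟨hxy, hdis⟩
    refine ⟨hxy, ?_⟩
    by_cases hpair : π⁻¹ x = p ∧ π⁻¹ y = q ∨ π⁻¹ x = q ∧ π⁻¹ y = p
    · exfalso
      rcases hpair with ⟨hx, hy⟩ | ⟨hx, hy⟩ <;>
        rw [Perm.inv_eq_iff_eq] at hx hy <;> subst hx hy <;>
        simp [hpq.lt, hpq.lt.not_gt, hτ, hτ.not_gt] at hdis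
    · push Not at hpair
      rwa [swap_apply_lt_swap_apply_iff_of_covBy hpq] at hdis <;> tauto

section topk

variable {hk : k ≤ n} {a : Fin k → Fin n} {σ π : Perm (Fin n)}

theorem mem_topkFinset : σ ∈ topkFinset hk a ↔ ∀ i, σ (Fin.castLE hk i) = a i := by
  simp [topkFinset]

theorem inv_apply_of_mem_topkFinset (hσ : σ ∈ topkFinset hk a) (i : Fin k) :
    σ⁻¹ (a i) = Fin.castLE hk i := by
  rw [Perm.inv_eq_iff_eq, mem_topkFinset.1 hσ i]

theorem le_inv_apply_of_mem_topkFinset (hσ : σ ∈ topkFinset hk a) {x : Fin n}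
    (hx : x ∉ Set.range a) : k ≤ (σ⁻¹ x : ℕ) := by
  by_contra! h
  exact hx ⟨⟨_, h⟩, by rw [← mem_topkFinset.1 hσ]; simp⟩

theorem mul_swap_mem_topkFinset (hπ : π ∈ topkFinset hk a) {p q : Fin n}
    (hp : k ≤ (p : ℕ)) (hq : k ≤ (q : ℕ)) : π * swap p q ∈ topkFinset hk a := by
  refine mem_topkFinset.2 fun i => ?_
  have hi : (Fin.castLE hk i : ℕ) < k := i.isLt
  rw [Perm.mul_apply, swap_apply_of_ne_of_ne (by grind) (by grind), mem_topkFinset.1 hπ]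

theorem inv_lt_inv_iff_of_mem_topkFinset (hσ : σ ∈ topkFinset hk a) (hπ : π ∈ topkFinset hk a)
    {x y : Fin n} (h : x ∈ Set.range a ∨ y ∈ Set.range a) :
    σ⁻¹ x < σ⁻¹ y ↔ π⁻¹ x < π⁻¹ y := by
  have fixed : ∀ {z}, z ∈ Set.range a → σ⁻¹ z = π⁻¹ z ∧ (σ⁻¹ z : ℕ) < k := by
    rintro _ ⟨i, rfl⟩
    simp [inv_apply_of_mem_topkFinset hσ, inv_apply_of_mem_topkFinset hπ]
  have free : ∀ {z}, z ∉ Set.range a → k ≤ (σ⁻¹ z : ℕ) ∧ k ≤ (π⁻¹ z : ℕ) := fun hz =>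
    ⟨le_inv_apply_of_mem_topkFinset hσ hz, le_inv_apply_of_mem_topkFinset hπ hz⟩
  by_cases hx : x ∈ Set.range a <;> by_cases hy : y ∈ Set.range a
  · rw [(fixed hx).1, (fixed hy).1]
  · have := fixed hx; have := free hy
    simp only [Fin.lt_def, Fin.ext_iff] at *; omega
  · have := free hx; have := fixed hy
    simp only [Fin.lt_def, Fin.ext_iff] at *; omega
  · tauto

variable {τ : Perm (Fin n)}

theorem strictMonoOn_of_forall_kendallDist_le (hπ : π ∈ topkFinset hk a)
    (hmin : ∀ ρ ∈ topkFinset hk a, kendallDist π τ ≤ kendallDist ρ τ) :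
    StrictMonoOn (fun p => τ⁻¹ (π p)) {p : Fin n | k ≤ (p : ℕ)} := by
  refine strictMonoOn_of_lt_succ ⟨fun _ hp _ _ _ hr => hp.trans (Fin.le_def.1 hr.1)⟩
    fun p hp hpk hsk => ?_
  have hcov := Order.covBy_succ_of_not_isMax hp
  refine lt_of_le_of_ne (not_lt.1 fun hτ => ?_) ((τ⁻¹.injective.comp π.injective).ne hcov.ne)
  exact (hmin _ (mul_swap_mem_topkFinset hπ hpk hsk)).not_gt (kendallDist_mul_swap_lt hcov hτ)

theorem inv_lt_inv_iff_of_forall_kendallDist_le (hπ : π ∈ topkFinset hk a)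
    (hmin : ∀ ρ ∈ topkFinset hk a, kendallDist π τ ≤ kendallDist ρ τ) {x y : Fin n}
    (hx : x ∉ Set.range a) (hy : y ∉ Set.range a) : π⁻¹ x < π⁻¹ y ↔ τ⁻¹ x < τ⁻¹ y := by
  simpa using ((strictMonoOn_of_forall_kendallDist_le hπ hmin).lt_iff_lt
    (le_inv_apply_of_mem_topkFinset hπ hx) (le_inv_apply_of_mem_topkFinset hπ hy)).symm

end topk

theorem kendallDist_decomp_general {n k : ℕ} (hk : k ≤ n) (a : Fin k → Fin n)
    (σ τ π : Equiv.Perm (Fin n))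
    (hσ : σ ∈ topkFinset hk a) (hπ : π ∈ topkFinset hk a)
    (hmin : ∀ ρ ∈ topkFinset hk a, kendallDist π τ ≤ kendallDist ρ τ) :
    kendallDist σ τ = kendallDist σ π + kendallDist π τ := by
  refine kendallDist_eq_add_of_forall_agree fun x y _ => ?_
  by_cases h : x ∈ Set.range a ∨ y ∈ Set.range a
  · exact .inl (inv_lt_inv_iff_of_mem_topkFinset hπ hσ h)
  · push Not at h
    exact .inr (inv_lt_inv_iff_of_forall_kendallDist_le hπ hmin h.1 h.2)

/-- Decomposition of distances: for a top-`k` partial ranking `R`, `σ ∈ R` and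
any `τ ∈ S_n`, `d(σ, τ) = d(σ, Π_R(τ)) + d(Π_R(τ), τ)`, where `Π_R(τ)` is the
(unique) Kendall-closest element of `R` to `τ`, here characterized as any
minimizer `π`. -/
theorem kendallDist_decomp {n k : ℕ} (hk : k ≤ n) (a : Fin k → Fin n)
    (ha : Function.Injective a) (σ τ π : Equiv.Perm (Fin n))
    (hσ : σ ∈ topkFinset hk a) (hπ : π ∈ topkFinset hk a)
    (hmin : ∀ ρ ∈ topkFinset hk a, kendallDist π τ ≤ kendallDist ρ τ) :
    kendallDist σ τ = kendallDist σ π + kendallDist π τ :=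
  kendallDist_decomp_general hk a σ τ π hσ hπ hmin
end
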